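/- For every countable ordinal α, the set S_α of models of P in the model-intersection construction is non-empty. -/

import Mathlib

open Ordinal Set

noncomputable section
attribute [local instance] Classical.propDecidable

namespace IVS

/-- Countable ordinals: ordinals below `ω₁`. -/
abbrev Ord1 := {o : Ordinal.{0} // o < ω₁}

theorem zero_lt_omega1 : (0 : Ordinal) < ω₁ := omega_pos 1

theorem succ_lt_omega1 {o : Ordinal} (h : o < ω₁) : o + 1 < ω₁ := by
  have : Order.succ o < ω₁ := by
    first
    | exact (Ordinal.isSuccLimit_omega 1).succ_lt h
    | exact (Cardinal.isSuccLimit_omega 1).succ_lt h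
  rwa [Order.succ_eq_add_one] at this

/-- zero as a countable ordinal -/
def O0 : Ord1 := ⟨0, zero_lt_omega1⟩

/-- successor on countable ordinals -/
def Ord1.succ (a : Ord1) : Ord1 := ⟨a.1 + 1, succ_lt_omega1 a.2⟩

/-- The truth domain `V`: `F_α < ⋯ < 0 < ⋯ < T_α` realized as a lexicographic sum. -/
abbrev TV := Ord1 ⊕ₗ (Unit ⊕ₗ Ord1ᵒᵈ)

/-- the false value `F_α` -/
def TV.F (a : Ord1) : TV := toLex (Sum.inl a)
/-- the middle value `0` -/
def TV.Z : TV := toLex (Sum.inr (toLex (Sum.inl ())))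
/-- the true value `T_α` -/
def TV.T (a : Ord1) : TV := toLex (Sum.inr (toLex (Sum.inr (OrderDual.toDual a))))

/-- the order of a truth value (`⊤` codes `+∞`, the order of `0`) -/
def ordOf (v : TV) : WithTop Ordinal :=
  match ofLex v with
  | .inl a => (a.1 : Ordinal)
  | .inr b =>
    match ofLex b with
    | .inl _ => ⊤
    | .inr a => ((OrderDual.ofDual a).1 : Ordinal)

/-- negation-as-failure: `¬F_α = T_{α+1}`, `¬T_α = F_{α+1}`, `¬0 = 0`. -/
def negv (v : TV) : TV :=
  match ofLex v with
  | .inl a => TV.T a.succ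
  | .inr b =>
    match ofLex b with
    | .inl _ => TV.Z
    | .inr a => TV.F (OrderDual.ofDual a).succ

/-- Literals of a propositional normal program (atoms are natural numbers). -/
inductive Lit where
  | pos (n : ℕ)
  | neg (n : ℕ)
  | tt
  | ff

/-- A normal program clause: a head atom and a body which is a conjunction of literals. -/
structure Clause where
  head : ℕ
  body : List Lit

/-- A (possibly infinite) propositional normal logic program. -/
abbrev Program := Set Clause

/-- Infinite-valued interpretations. -/
abbrev Interp := ℕ → TV

/-- the interpretation assigning `F₀` to every atom (denoted `∅` in the paper) -/
def botI : Interp := fun _ => TV.F O0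

def evalLit (I : Interp) : Lit → TV
  | .pos n => I n
  | .neg n => negv (I n)
  | .tt => TV.T O0
  | .ff => TV.F O0

/-- value of a body (conjunction evaluated by `min`; empty conjunction is `T₀`) -/
def evalBody (I : Interp) (b : List Lit) : TV :=
  (b.map (evalLit I)).foldr min (TV.T O0)

/-- least upper bound in `V` (well-defined by the lub-existence theorem) -/
def lub (S : Set TV) : TV := if h : ∃ v, IsLUB S v then h.choose else TV.Z

/-- the immediate consequence operator -/
def TP (P : Program) (I : Interp) : Interp :=
  fun p => lub {v | ∃ c ∈ P, c.head = p ∧ evalBody I c.body = v}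

/-- `I` is an (infinite-valued) model of `P` -/
def isModel (P : Program) (I : Interp) : Prop :=
  ∀ c ∈ P, evalBody I c.body ≤ I c.head

/-- the level set `I ∥ v` -/
def level (I : Interp) (v : TV) : Set ℕ := {p | I p = v}

/-- `I =_α J` -/
def eqA (α : Ord1) (I J : Interp) : Prop :=
  ∀ β ≤ α, level I (TV.T β) = level J (TV.T β) ∧ level I (TV.F β) = level J (TV.F β)

/-- `I ⊏_α J` -/
def sqltA (α : Ord1) (I J : Interp) : Prop :=
  (∀ β < α, eqA β I J) ∧
    ((level I (TV.T α) ⊂ level J (TV.T α) ∧ level J (TV.F α) ⊆ level I (TV.F α)) ∨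
     (level I (TV.T α) ⊆ level J (TV.T α) ∧ level J (TV.F α) ⊂ level I (TV.F α)))

/-- `I ⊑_α J` -/
def sqleA (α : Ord1) (I J : Interp) : Prop := eqA α I J ∨ sqltA α I J

/-- `I ⊏_∞ J` -/
def sqltInf (I J : Interp) : Prop := ∃ α : Ord1, sqltA α I J

/-- `I ⊑_∞ J` -/
def sqleInf (I J : Interp) : Prop := I = J ∨ sqltInf I J

/-- the sequence `T_P^n(I)` is an `α`-chain -/
def isChainA (P : Program) (α : Ord1) (I : Interp) : Prop :=
  ∀ n : ℕ, sqleA α ((TP P)^[n] I) ((TP P)^[n + 1] I)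

/-- the interpretation `T_{P,α}^ω(I)` -/
def TPomega (P : Program) (α : Ord1) (I : Interp) : Interp := fun p =>
  if ordOf (I p) < (α.1 : WithTop Ordinal) then I p
  else if ∃ n : ℕ, (TP P)^[n] I p = TV.T α then TV.T α
  else if ∀ n : ℕ, (TP P)^[n] I p = TV.F α then TV.F α
  else TV.F α.succ

/-- `⊔_{β<α} M_β` for a family defined below `α` -/
def sqcupI (α : Ord1) (f : ∀ β : Ordinal, β < α.1 → Interp) : Interp := fun p =>
  if h : ∃ β : Ordinal, ∃ hb : β < α.1, ordOf (f β hb p) = (β : WithTop Ordinal)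
  then f h.choose h.choose_spec.choose p
  else TV.F α

/-- the approximations `M_α` to the minimum model (junk values for `α ≥ ω₁`) -/
def MA (P : Program) (o : Ordinal) : Interp :=
  Ordinal.limitRecOn o
    (TPomega P O0 botI)
    (fun o' ih => if h : o' + 1 < ω₁ then TPomega P ⟨o' + 1, h⟩ ih else ih)
    (fun o' _ ih =>
      if h : o' < ω₁ then TPomega P ⟨o', h⟩ (sqcupI ⟨o', h⟩ ih) else botI)

/-- `M_α` for a countable ordinal `α` -/
def Mα (P : Program) (α : Ord1) : Interp := MA P α.1

/-- the defining property of the depth `δ` of a program -/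
def isDepth (P : Program) (δ : Ord1) : Prop :=
  (level (Mα P δ) (TV.T δ) = ∅ ∧ level (Mα P δ) (TV.F δ) = ∅) ∧
    ∀ β : Ord1, β < δ →
      (level (Mα P β) (TV.T β) ≠ ∅ ∨ level (Mα P β) (TV.F β) ≠ ∅)

/-- the depth of a program -/
def depth (P : Program) : Ord1 :=
  if h : ∃ δ : Ord1, isDepth P δ then h.choose else O0

/-- the minimum model `M_P` -/
def MP (P : Program) : Interp := fun p =>
  if ordOf (Mα P (depth P) p) < ((depth P).1 : WithTop Ordinal)
  then Mα P (depth P) p else TV.Z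

/-- the set of all infinite-valued models of `P` -/
def models (P : Program) : Set Interp := {I | isModel P I}

/-- `M ♯ α`: the part of `M` consisting of values of order `α` -/
def sharp (I : Interp) (α : Ord1) : Set (ℕ × TV) :=
  {pv | I pv.1 = pv.2 ∧ ordOf pv.2 = (α.1 : WithTop Ordinal)}

/-- `⨀^α S = ⋀^α S ∪ ⋁^α S` -/
def odot (α : Ord1) (S : Set Interp) : Set (ℕ × TV) :=
  {pv | (∃ p : ℕ, pv = (p, TV.T α) ∧ ∀ M ∈ S, M p = TV.T α) ∨
        (∃ p : ℕ, pv = (p, TV.F α) ∧ ∃ M ∈ S, M p = TV.F α)}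

/-- the sets `S_α` of the model intersection construction (junk for `α ≥ ω₁`) -/
def SA (P : Program) (o : Ordinal) : Set Interp :=
  Ordinal.limitRecOn o
    {M ∈ models P | sharp M O0 = odot O0 (models P)}
    (fun o' ih =>
      if h : o' + 1 < ω₁ then {M ∈ ih | sharp M ⟨o' + 1, h⟩ = odot ⟨o' + 1, h⟩ ih} else ih)
    (fun o' _ ih =>
      if h : o' < ω₁ then
        {M : Interp | M ∈ (⋂ (b : Ordinal) (hb : b < o'), ih b hb) ∧
          sharp M ⟨o', h⟩ = odot ⟨o', h⟩ (⋂ (b : Ordinal) (hb : b < o'), ih b hb)}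
      else ∅)

/-!
Write `𝒫_α` for the set that `S_α` is carved out of: `𝓜` for `α = 0`, `⋂_{β<α} S_β` otherwise.
Call an atom decided at level `β` if it is `T_β` in every member of `𝒫_β`, or `F_β` in some
member. If every `𝒫_β` with `β < α` is non-empty, an atom is decided at one level below `α` at
most, because a member of `𝒫_γ` lies in `S_β` for every `β < γ`. So one can glue an
interpretation giving each decided atom its value at that level and `T_α` to all other atoms.
It is a model, since a clause it violated would be violated, literal by literal, by some model
in some `𝒫_β`; and by construction its part of order `β` is `⨀^β 𝒫_β`, so it lies in `S_β` for
all `β < α`. Transfinite induction makes every `𝒫_α` non-empty, and the interpretation glued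
for `α + 1` lies in `S_α`.
-/

namespace TV

@[simp] theorem T_le_T {a b : Ord1} : T a ≤ T b ↔ b ≤ a := by simp [T]

@[simp] theorem T_lt_T {a b : Ord1} : T a < T b ↔ b < a := by simp [T]

@[simp] theorem F_le_F {a b : Ord1} : F a ≤ F b ↔ a ≤ b := by simp [F]

@[simp] theorem T_inj {a b : Ord1} : T a = T b ↔ a = b := by simp [T]

@[simp] theorem F_inj {a b : Ord1} : F a = F b ↔ a = b := by simp [F]

@[simp] theorem T_ne_F {a b : Ord1} : T a ≠ F b := by simp [T, F]

@[simp] theorem F_ne_T {a b : Ord1} : F a ≠ T b := T_ne_F.symm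

theorem F_lt_T {a b : Ord1} : F a < T b := by simp [T, F]

theorem cases (v : TV) : (∃ a, v = F a) ∨ v = Z ∨ ∃ a, v = T a := by
  rcases v with a | (u | a)
  · exact Or.inl ⟨a, rfl⟩
  · exact Or.inr (Or.inl rfl)
  · exact Or.inr (Or.inr ⟨OrderDual.ofDual a, rfl⟩)

theorem T_le_iff {v : TV} {b : Ord1} : T b ≤ v ↔ ∃ c ≤ b, v = T c := by
  refine ⟨fun h => ?_, fun ⟨c, hc, hv⟩ => hv ▸ T_le_T.2 hc⟩
  rcases cases v with ⟨a, rfl⟩ | rfl | ⟨a, rfl⟩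
  · exact absurd h F_lt_T.not_ge
  · exact absurd h (by simp [T, Z])
  · exact ⟨a, T_le_T.1 h, rfl⟩

theorem T_lt_iff {v : TV} {b : Ord1} : T b < v ↔ ∃ c < b, v = T c := by
  refine ⟨fun h => ?_, fun ⟨c, hc, hv⟩ => hv ▸ T_lt_T.2 hc⟩
  obtain ⟨c, hcb, rfl⟩ := T_le_iff.1 h.le
  exact ⟨c, lt_of_le_of_ne hcb (by rintro rfl; exact h.ne rfl), rfl⟩

theorem le_F_iff {v : TV} {b : Ord1} : v ≤ F b ↔ ∃ c ≤ b, v = F c := by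
  refine ⟨fun h => ?_, fun ⟨c, hc, hv⟩ => hv ▸ F_le_F.2 hc⟩
  rcases cases v with ⟨a, rfl⟩ | rfl | ⟨a, rfl⟩
  · exact ⟨a, F_le_F.1 h, rfl⟩
  · exact absurd h (by simp [F, Z])
  · exact absurd h F_lt_T.not_ge

end TV

theorem Ord1.lt_succ (a : Ord1) : a < a.succ :=
  show a.1 < a.1 + 1 from Order.lt_add_one_iff.2 le_rfl

@[simp] theorem ordOf_T (a : Ord1) : ordOf (TV.T a) = (a.1 : WithTop Ordinal) := rfl

@[simp] theorem ordOf_F (a : Ord1) : ordOf (TV.F a) = (a.1 : WithTop Ordinal) := rfl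

theorem ordOf_Z : ordOf TV.Z = ⊤ := rfl

theorem ordOf_eq_coe_iff {v : TV} {b : Ord1} :
    ordOf v = (b.1 : WithTop Ordinal) ↔ v = TV.T b ∨ v = TV.F b := by
  rcases TV.cases v with ⟨a, rfl⟩ | rfl | ⟨a, rfl⟩
  · simp [Subtype.ext_iff, eq_comm]
  · exact iff_of_false (by simp [ordOf_Z]) (by simp [TV.T, TV.F, TV.Z])
  · simp [Subtype.ext_iff, eq_comm]

@[simp] theorem negv_T (a : Ord1) : negv (TV.T a) = TV.F a.succ := rfl

@[simp] theorem negv_F (a : Ord1) : negv (TV.F a) = TV.T a.succ := rfl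

theorem negv_eq_T {v : TV} {c : Ord1} (h : negv v = TV.T c) : ∃ a, v = TV.F a ∧ c = a.succ := by
  rcases TV.cases v with ⟨a, rfl⟩ | rfl | ⟨a, rfl⟩
  · exact ⟨a, rfl, (TV.T_inj.1 h).symm⟩
  · exact absurd h (by simp [negv, TV.Z, TV.T])
  · exact absurd h (by simp)

theorem negv_eq_F {v : TV} {c : Ord1} (h : negv v = TV.F c) : ∃ a, v = TV.T a ∧ c = a.succ := by
  rcases TV.cases v with ⟨a, rfl⟩ | rfl | ⟨a, rfl⟩
  · exact absurd h (by simp)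
  · exact absurd h (by simp [negv, TV.Z, TV.F])
  · exact ⟨a, rfl, (TV.F_inj.1 h).symm⟩

theorem evalBody_cons (I : Interp) (x : Lit) (b : List Lit) :
    evalBody I (x :: b) = evalLit I x ⊓ evalBody I b := rfl

theorem evalBody_le_evalLit {I : Interp} {b : List Lit} {x : Lit} (hx : x ∈ b) :
    evalBody I b ≤ evalLit I x := by
  induction b with
  | nil => simp at hx
  | cons y b ih =>
    rw [evalBody_cons]
    rcases List.mem_cons.1 hx with rfl | hx
    · exact inf_le_left
    · exact inf_le_right.trans (ih hx)

theorem exists_evalLit_le_of_evalBody_le {I : Interp} {b : List Lit} {v : TV}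
    (hv : v < TV.T O0) (h : evalBody I b ≤ v) : ∃ x ∈ b, evalLit I x ≤ v := by
  induction b with
  | nil => exact absurd h hv.not_ge
  | cons y b ih =>
    rw [evalBody_cons] at h
    rcases le_total (evalLit I y) (evalBody I b) with hy | hb
    · exact ⟨y, List.mem_cons_self, inf_eq_left.2 hy ▸ h⟩
    · obtain ⟨x, hx, hxv⟩ := ih (inf_eq_right.2 hb ▸ h)
      exact ⟨x, List.mem_cons_of_mem y hx, hxv⟩

theorem evalBody_congr {I J : Interp} {b : List Lit} (h : ∀ x ∈ b, evalLit I x = evalLit J x) :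
    evalBody I b = evalBody J b := by
  rw [evalBody, evalBody, List.map_congr_left h]

variable {P : Program}

theorem SA_zero : SA P 0 = {M ∈ models P | sharp M O0 = odot O0 (models P)} :=
  Ordinal.limitRecOn_zero _ _ _

theorem SA_add_one {o : Ordinal} (h : o + 1 < ω₁) :
    SA P (o + 1) = {M ∈ SA P o | sharp M ⟨o + 1, h⟩ = odot ⟨o + 1, h⟩ (SA P o)} :=
  (Ordinal.limitRecOn_add_one _ _ _ _).trans (dif_pos h)

theorem SA_limit {o : Ordinal} (hlim : Order.IsSuccLimit o) (h : o < ω₁) :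
    SA P o = {M | M ∈ (⋂ (b : Ordinal) (_ : b < o), SA P b) ∧
      sharp M ⟨o, h⟩ = odot ⟨o, h⟩ (⋂ (b : Ordinal) (_ : b < o), SA P b)} :=
  (Ordinal.limitRecOn_limit _ _ _ _ hlim).trans (dif_pos h)

/-- `𝒫_o`, uniformly: it is `𝓜` for `o = 0` and `⋂_{b<o} S_b` otherwise. -/
def preSA (P : Program) (o : Ordinal) : Set Interp := {M ∈ models P | ∀ b < o, M ∈ SA P b}

theorem preSA_antitone {b o : Ordinal} (h : b ≤ o) : preSA P o ⊆ preSA P b :=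
  fun _ hM => ⟨hM.1, fun c hc => hM.2 c (hc.trans_le h)⟩

theorem preSA_subset_SA {b o : Ordinal} (h : b < o) : preSA P o ⊆ SA P b :=
  fun _ hM => hM.2 b h

theorem SA_zero_subset_models : SA P 0 ⊆ models P := by
  rw [SA_zero]; exact fun _ hM => hM.1

theorem SA_subset_preSA {o : Ordinal} (ho : o < ω₁) : SA P o ⊆ preSA P o := by
  induction o using WellFoundedLT.induction with
  | _ o IH =>
    intro M hM
    rcases Ordinal.zero_or_succ_or_isSuccLimit o with rfl | ⟨a, rfl⟩ | hlim
    · exact ⟨SA_zero_subset_models hM, fun b hb => absurd hb not_lt_zero⟩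
    · rw [Order.succ_eq_add_one] at ho hM ⊢
      rw [SA_add_one ho] at hM
      have hMa := IH a (Order.lt_succ a) ((Order.lt_succ a).trans ho) hM.1
      refine ⟨hMa.1, fun b hb => ?_⟩
      rcases (Order.lt_add_one_iff.1 hb).lt_or_eq with hb | rfl
      · exact hMa.2 b hb
      · exact hM.1
    · rw [SA_limit hlim ho] at hM
      have hMb : ∀ b < o, M ∈ SA P b := fun b hb => Set.mem_iInter₂.1 hM.1 b hb
      exact ⟨SA_zero_subset_models (hMb 0 hlim.bot_lt), hMb⟩

theorem preSA_zero : preSA P 0 = models P := by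
  simp [preSA]

theorem preSA_add_one {o : Ordinal} (ho : o < ω₁) : preSA P (o + 1) = SA P o := by
  refine Set.Subset.antisymm (preSA_subset_SA (Order.lt_add_one_iff.2 le_rfl)) fun M hM => ?_
  have hMo := SA_subset_preSA ho hM
  refine ⟨hMo.1, fun b hb => ?_⟩
  rcases (Order.lt_add_one_iff.1 hb).lt_or_eq with hb | rfl
  · exact hMo.2 b hb
  · exact hM

theorem preSA_eq_iInter {o : Ordinal} (h0 : 0 < o) (ho : o < ω₁) :
    preSA P o = ⋂ (b : Ordinal) (_ : b < o), SA P b := by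
  ext M
  simp only [Set.mem_iInter]
  refine ⟨fun hM b hb => hM.2 b hb, fun hM => ⟨?_, hM⟩⟩
  exact (SA_subset_preSA (h0.trans ho) (hM 0 h0)).1

theorem mem_SA_iff {M : Interp} (g : Ord1) :
    M ∈ SA P g.1 ↔ M ∈ preSA P g.1 ∧ sharp M g = odot g (preSA P g.1) := by
  obtain ⟨o, ho⟩ := g
  rcases Ordinal.zero_or_succ_or_isSuccLimit o with rfl | ⟨a, ha⟩ | hlim
  · rw [SA_zero, preSA_zero]; rfl
  · rw [Order.succ_eq_add_one] at ha
    subst ha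
    rw [SA_add_one ho, preSA_add_one ((Order.lt_succ a).trans ho)]; rfl
  · rw [SA_limit hlim ho, preSA_eq_iInter hlim.bot_lt ho]; rfl

/-- The atoms of `⋀^g 𝒫_g`. -/
def allTrue (P : Program) (g : Ord1) : Set ℕ := {p | ∀ M ∈ preSA P g.1, M p = TV.T g}

/-- The atoms of `⋁^g 𝒫_g`. -/
def someFalse (P : Program) (g : Ord1) : Set ℕ := {p | ∃ M ∈ preSA P g.1, M p = TV.F g}

def DecidedAt (P : Program) (g : Ord1) (p : ℕ) : Prop := p ∈ allTrue P g ∨ p ∈ someFalse P g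

theorem notMem_allTrue_of_mem_someFalse {g : Ord1} {q : ℕ} (h : q ∈ someFalse P g) :
    q ∉ allTrue P g := by
  obtain ⟨M, hM, hMq⟩ := h
  exact fun hA => TV.T_ne_F ((hA M hM).symm.trans hMq)

theorem apply_eq_T_iff_of_mem_SA {M : Interp} {g : Ord1} (hM : M ∈ SA P g.1) (q : ℕ) :
    M q = TV.T g ↔ q ∈ allTrue P g := by
  have h := Set.ext_iff.1 ((mem_SA_iff g).1 hM).2 (q, TV.T g)
  simpa [sharp, odot, allTrue] using h

theorem apply_eq_F_iff_of_mem_SA {M : Interp} {g : Ord1} (hM : M ∈ SA P g.1) (q : ℕ) :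
    M q = TV.F g ↔ q ∈ someFalse P g := by
  have h := Set.ext_iff.1 ((mem_SA_iff g).1 hM).2 (q, TV.F g)
  simpa [sharp, odot, someFalse] using h

theorem ordOf_apply_eq_iff_of_mem_SA {M : Interp} {g : Ord1} (hM : M ∈ SA P g.1) (q : ℕ) :
    ordOf (M q) = (g.1 : WithTop Ordinal) ↔ DecidedAt P g q := by
  rw [ordOf_eq_coe_iff, apply_eq_T_iff_of_mem_SA hM, apply_eq_F_iff_of_mem_SA hM, DecidedAt]

theorem exists_mem_preSA_ordOf_eq {g : Ord1} {q : ℕ} (hne : (preSA P g.1).Nonempty)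
    (h : DecidedAt P g q) : ∃ N ∈ preSA P g.1, ordOf (N q) = (g.1 : WithTop Ordinal) := by
  rcases h with hA | ⟨N, hN, hNq⟩
  · obtain ⟨N, hN⟩ := hne
    exact ⟨N, hN, by rw [hA N hN, ordOf_T]⟩
  · exact ⟨N, hN, by rw [hNq, ordOf_F]⟩

theorem DecidedAt.eq_of_le {g d : Ord1} {q : ℕ} (hne : (preSA P d.1).Nonempty)
    (hg : DecidedAt P g q) (hd : DecidedAt P d q) (hgd : g ≤ d) : g = d := by
  by_contra hgd'
  obtain ⟨N, hN, hNq⟩ := exists_mem_preSA_ordOf_eq hne hd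
  have hlt : g < d := lt_of_le_of_ne hgd hgd'
  have hNg := (ordOf_apply_eq_iff_of_mem_SA (preSA_subset_SA hlt hN) q).2 hg
  exact hgd' (Subtype.ext (WithTop.coe_inj.1 (hNg.symm.trans hNq)))

def witness (P : Program) (α : Ord1) : Interp := fun p =>
  if h : ∃ g, g < α ∧ DecidedAt P g p then
    if p ∈ allTrue P h.choose then TV.T h.choose else TV.F h.choose
  else TV.T α

section Witness

variable {α : Ord1}

theorem DecidedAt.unique {g d : Ord1} {q : ℕ} (hne : ∀ g < α, (preSA P g.1).Nonempty)
    (hgα : g < α) (hdα : d < α) (hg : DecidedAt P g q) (hd : DecidedAt P d q) : g = d := by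
  rcases le_total g d with hgd | hdg
  · exact hg.eq_of_le (hne d hdα) hd hgd
  · exact (hd.eq_of_le (hne g hgα) hg hdg).symm

theorem witness_eq_of_decidedAt {g : Ord1} {q : ℕ} (hne : ∀ g < α, (preSA P g.1).Nonempty)
    (hg : g < α) (hq : DecidedAt P g q) :
    witness P α q = if q ∈ allTrue P g then TV.T g else TV.F g := by
  have h : ∃ g, g < α ∧ DecidedAt P g q := ⟨g, hg, hq⟩
  rw [witness, dif_pos h, DecidedAt.unique hne h.choose_spec.1 hg h.choose_spec.2 hq]

theorem witness_eq_T {g : Ord1} {q : ℕ} (hne : ∀ g < α, (preSA P g.1).Nonempty)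
    (hg : g < α) (hq : q ∈ allTrue P g) : witness P α q = TV.T g := by
  rw [witness_eq_of_decidedAt hne hg (Or.inl hq), if_pos hq]

theorem witness_eq_F {g : Ord1} {q : ℕ} (hne : ∀ g < α, (preSA P g.1).Nonempty)
    (hg : g < α) (hq : q ∈ someFalse P g) : witness P α q = TV.F g := by
  rw [witness_eq_of_decidedAt hne hg (Or.inr hq), if_neg (notMem_allTrue_of_mem_someFalse hq)]

theorem witness_cases (hne : ∀ g < α, (preSA P g.1).Nonempty) (q : ℕ) :
    (∃ g < α, q ∈ allTrue P g ∧ witness P α q = TV.T g) ∨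
    (∃ g < α, q ∈ someFalse P g ∧ witness P α q = TV.F g) ∨
    ((∀ g < α, ¬ DecidedAt P g q) ∧ witness P α q = TV.T α) := by
  by_cases h : ∃ g, g < α ∧ DecidedAt P g q
  · obtain ⟨g, hg, hA | hB⟩ := h
    · exact Or.inl ⟨g, hg, hA, witness_eq_T hne hg hA⟩
    · exact Or.inr (Or.inl ⟨g, hg, hB, witness_eq_F hne hg hB⟩)
  · exact Or.inr (Or.inr ⟨fun g hg hd => h ⟨g, hg, hd⟩, dif_neg h⟩)

theorem mem_allTrue_of_witness_eq_T {g : Ord1} {q : ℕ} (hne : ∀ g < α, (preSA P g.1).Nonempty)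
    (h : witness P α q = TV.T g) (hg : g < α) : q ∈ allTrue P g := by
  rcases witness_cases hne q with ⟨d, -, hA, hd⟩ | ⟨d, -, -, hd⟩ | ⟨-, hd⟩
  · rwa [TV.T_inj.1 (h.symm.trans hd)]
  · exact absurd (h.symm.trans hd) TV.T_ne_F
  · exact absurd (TV.T_inj.1 (h.symm.trans hd)) hg.ne

theorem mem_someFalse_of_witness_eq_F {g : Ord1} {q : ℕ} (hne : ∀ g < α, (preSA P g.1).Nonempty)
    (h : witness P α q = TV.F g) : g < α ∧ q ∈ someFalse P g := by
  rcases witness_cases hne q with ⟨d, -, -, hd⟩ | ⟨d, hd, hB, hv⟩ | ⟨-, hd⟩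
  · exact absurd (h.symm.trans hd) TV.F_ne_T
  · obtain rfl := TV.F_inj.1 (h.symm.trans hv)
    exact ⟨hd, hB⟩
  · exact absurd (h.symm.trans hd) TV.F_ne_T

theorem evalLit_eq_T_of_evalLit_witness {x : Lit} {e b : Ord1} {N : Interp}
    (hne : ∀ g < α, (preSA P g.1).Nonempty) (h : evalLit (witness P α) x = TV.T e) (he : e < α)
    (heb : e ≤ b) (hN : N ∈ preSA P b.1) : evalLit N x = TV.T e := by
  cases x with
  | pos n => exact mem_allTrue_of_witness_eq_T hne h he N (preSA_antitone heb hN)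
  | neg n =>
    obtain ⟨a, ha, rfl⟩ := negv_eq_T h
    have hNa : N ∈ SA P a.1 := preSA_subset_SA ((Ord1.lt_succ a).trans_le heb) hN
    show negv (N n) = _
    rw [(apply_eq_F_iff_of_mem_SA hNa n).2 (mem_someFalse_of_witness_eq_F hne ha).2, negv_F]
  | tt => exact h
  | ff => exact absurd h TV.F_ne_T

theorem evalLit_witness_eq_F {x : Lit} {e g : Ord1} {M : Interp}
    (hne : ∀ g < α, (preSA P g.1).Nonempty) (hg : g < α) (hM : M ∈ preSA P g.1)
    (h : evalLit M x = TV.F e) (heg : e ≤ g) : evalLit (witness P α) x = TV.F e := by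
  cases x with
  | pos n => exact witness_eq_F hne (heg.trans_lt hg) ⟨M, preSA_antitone heg hM, h⟩
  | neg n =>
    obtain ⟨a, ha, rfl⟩ := negv_eq_F h
    have hag : a < g := (Ord1.lt_succ a).trans_le heg
    have hA := (apply_eq_T_iff_of_mem_SA (preSA_subset_SA hag hM) n).1 ha
    show negv (witness P α n) = _
    rw [witness_eq_T hne (hag.trans hg) hA, negv_T]
  | tt => exact absurd h TV.T_ne_F
  | ff => exact h

/-- The body has some value `T_b`, `b < g`, under the witness, hence under every member of `𝒫_b`;
these, being models, decide the head at a level `≤ b`. -/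
theorem exists_decidedAt_head {c : Clause} {g : Ord1} (hne : ∀ g < α, (preSA P g.1).Nonempty)
    (hc : c ∈ P) (hg : g ≤ α) (h : TV.T g < evalBody (witness P α) c.body) :
    ∃ d < g, DecidedAt P d c.head := by
  obtain ⟨b, hbg, hb⟩ := TV.T_lt_iff.1 h
  have hbody : ∀ N ∈ preSA P b.1, evalBody N c.body = TV.T b := by
    intro N hN
    refine (evalBody_congr fun x hx => ?_).trans hb
    obtain ⟨e, heb, hxe⟩ := TV.T_le_iff.1 (hb ▸ evalBody_le_evalLit hx)
    rw [hxe, evalLit_eq_T_of_evalLit_witness hne hxe (heb.trans_lt (hbg.trans_le hg)) heb hN]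
  by_cases hall : c.head ∈ allTrue P b
  · exact ⟨b, hbg, Or.inl hall⟩
  obtain ⟨N, hN, hNb⟩ : ∃ N ∈ preSA P b.1, N c.head ≠ TV.T b := by
    simpa [allTrue] using hall
  obtain ⟨d, hdb, hNd⟩ := TV.T_le_iff.1 (hbody N hN ▸ hN.1 c hc)
  have hdb : d < b := lt_of_le_of_ne hdb (by rintro rfl; exact hNb hNd)
  exact ⟨d, hdb.trans hbg,
    Or.inl ((apply_eq_T_iff_of_mem_SA (preSA_subset_SA hdb hN) _).1 hNd)⟩

theorem evalBody_witness_le_F {c : Clause} {g : Ord1} (hne : ∀ g < α, (preSA P g.1).Nonempty)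
    (hc : c ∈ P) (hg : g < α) (hq : c.head ∈ someFalse P g) :
    evalBody (witness P α) c.body ≤ TV.F g := by
  obtain ⟨M, hM, hMq⟩ := hq
  obtain ⟨x, hx, hxg⟩ := exists_evalLit_le_of_evalBody_le TV.F_lt_T (hMq ▸ hM.1 c hc)
  obtain ⟨e, heg, hxe⟩ := TV.le_F_iff.1 hxg
  calc evalBody (witness P α) c.body ≤ evalLit (witness P α) x := evalBody_le_evalLit hx
    _ = TV.F e := evalLit_witness_eq_F hne hg hM hxe heg
    _ ≤ TV.F g := TV.F_le_F.2 heg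

theorem witness_mem_models (hne : ∀ g < α, (preSA P g.1).Nonempty) : witness P α ∈ models P := by
  intro c hc
  rcases witness_cases hne c.head with ⟨g, hg, hA, hw⟩ | ⟨g, hg, hB, hw⟩ | ⟨hund, hw⟩
  · rw [hw]
    by_contra! h
    obtain ⟨d, hdg, hd⟩ := exists_decidedAt_head hne hc hg.le h
    exact hdg.ne (DecidedAt.unique hne (hdg.trans hg) hg hd (Or.inl hA))
  · exact hw ▸ evalBody_witness_le_F hne hc hg hB
  · rw [hw]
    by_contra! h
    obtain ⟨d, hdα, hd⟩ := exists_decidedAt_head hne hc le_rfl h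
    exact hund d hdα hd

theorem sharp_witness {b : Ord1} (hne : ∀ g < α, (preSA P g.1).Nonempty) (hb : b < α) :
    sharp (witness P α) b = odot b (preSA P b.1) := by
  ext ⟨q, v⟩
  simp only [sharp, odot, Set.mem_ofPred_eq, Prod.mk.injEq, ordOf_eq_coe_iff]
  constructor
  · rintro ⟨hv, rfl | rfl⟩
    · exact Or.inl ⟨q, ⟨rfl, rfl⟩, mem_allTrue_of_witness_eq_T hne hv hb⟩
    · exact Or.inr ⟨q, ⟨rfl, rfl⟩, (mem_someFalse_of_witness_eq_F hne hv).2⟩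
  · rintro (⟨p, ⟨rfl, rfl⟩, hA⟩ | ⟨p, ⟨rfl, rfl⟩, hB⟩)
    · exact ⟨witness_eq_T hne hb hA, Or.inl rfl⟩
    · exact ⟨witness_eq_F hne hb hB, Or.inr rfl⟩

theorem witness_mem_SA (hne : ∀ g < α, (preSA P g.1).Nonempty) (b : Ord1) (hb : b < α) :
    witness P α ∈ SA P b.1 := by
  induction b using WellFoundedLT.induction with
  | _ b IH =>
    refine (mem_SA_iff b).2 ⟨⟨witness_mem_models hne, fun o ho => ?_⟩, sharp_witness hne hb⟩
    exact IH ⟨o, ho.trans b.2⟩ ho (lt_trans ho hb)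

end Witness

theorem preSA_nonempty (α : Ord1) : (preSA P α.1).Nonempty := by
  induction α using WellFoundedLT.induction with
  | _ α IH =>
    exact ⟨witness P α, witness_mem_models IH,
      fun o ho => witness_mem_SA IH ⟨o, ho.trans α.2⟩ ho⟩

/-- Every set `S_α` of the model intersection construction is non-empty. -/
theorem SA_nonempty (P : Program) (α : Ord1) : (SA P α.1).Nonempty :=
  ⟨witness P α.succ, witness_mem_SA (fun g _ => preSA_nonempty g) α (Ord1.lt_succ α)⟩

end IVS
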